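/- arXiv:2506.19294 — 6 statements merged into one kernel-verified Lean document; each statement's English description precedes it below -/
import Mathlib

section
/- For the Cressie–Read generator φ_k(t) = (t^k − k·t + k − 1)/(k(k−1)) with k > 1, defined for t ≥ 0, the convex conjugate satisfies φ_k*(y) = (1/k)·((k−1)·y + 1)_+^{k*} − 1/k where k* = k/(k−1), i.e., sup over t ≥ 0 of (t·y − φ_k(t)) equals this value for all real y. -/
/-!
Writing `a = (k - 1) y + 1`, the objective is `t y - φ_k(t) = (t a - t ^ k / k) / (k - 1) - 1 / k`,
so the conjugate of `φ_k` is an affine image of the conjugate of `t ↦ t ^ k / k` on `[0, ∞)`.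
Young's inequality bounds `t a ≤ t (a)_+` by `t ^ k / k + (a)_+ ^ k* / k*`, with equality at
`t = (a)_+ ^ (k* - 1)`.
-/

open Real

section YoungConjugate

variable {p q : ℝ}

lemma mul_sub_rpow_div_le (hpq : p.HolderConjugate q) {t : ℝ} (ht : 0 ≤ t) (a : ℝ) :
    t * a - t ^ p / p ≤ max a 0 ^ q / q := by
  have hyoung := young_inequality_of_nonneg ht (le_max_right a 0) hpq
  nlinarith [mul_le_mul_of_nonneg_left (le_max_left a 0) ht]

lemma rpow_sub_one_mul_sub_rpow_div (hpq : p.HolderConjugate q) (a : ℝ) :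
    max a 0 ^ (q - 1) * a - (max a 0 ^ (q - 1)) ^ p / p = max a 0 ^ q / q := by
  have hb : 0 ≤ max a 0 := le_max_right a 0
  have hmul : max a 0 ^ (q - 1) * a = max a 0 ^ q := by
    rcases le_total a 0 with ha | ha
    · rw [max_eq_right ha, zero_rpow hpq.symm.sub_one_ne_zero, zero_rpow hpq.symm.ne_zero,
        zero_mul]
    · rw [max_eq_left ha]
      conv_rhs => rw [← sub_add_cancel q 1]
      rw [rpow_add' ha (by simpa using hpq.symm.ne_zero), rpow_one]
  have hpow : (max a 0 ^ (q - 1)) ^ p = max a 0 ^ q := by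
    rw [← rpow_mul hb, hpq.symm.sub_one_mul_conj]
  rw [hmul, hpow, div_eq_mul_inv, div_eq_mul_inv, ← hpq.one_sub_inv]
  ring

end YoungConjugate

lemma cressieRead_objective_eq {k : ℝ} (hk₀ : k ≠ 0) (hk₁ : k - 1 ≠ 0) (t y : ℝ) :
    t * y - (t ^ k - k * t + k - 1) / (k * (k - 1)) =
      (t * ((k - 1) * y + 1) - t ^ k / k) / (k - 1) - 1 / k := by
  field_simp
  ring

/-- Convex conjugate of the Cressie–Read generator
`φ_k(t) = (t^k − k t + k − 1)/(k(k−1))` on `t ≥ 0`, for `k > 1`: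
`φ_k*(y) = (1/k)·((k−1)y + 1)_+^{k*} − 1/k` with `k* = k/(k−1)`. -/
theorem cressieRead_conjugate (k : ℝ) (hk : 1 < k) (y : ℝ) :
    IsLUB {v : ℝ | ∃ t : ℝ, 0 ≤ t ∧
        v = t * y - (t ^ k - k * t + k - 1) / (k * (k - 1))}
      ((1 / k) * (max ((k - 1) * y + 1) 0) ^ (k / (k - 1)) - 1 / k) := by
  set a := (k - 1) * y + 1
  have hpq : k.HolderConjugate (k / (k - 1)) := .conjExponent hk
  have hk₁ : 0 < k - 1 := hpq.sub_one_pos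
  have hvalue : 1 / k * max a 0 ^ (k / (k - 1)) - 1 / k =
      max a 0 ^ (k / (k - 1)) / (k / (k - 1)) / (k - 1) - 1 / k := by
    field_simp
  have hobj := cressieRead_objective_eq hpq.ne_zero hk₁.ne' (y := y)
  refine IsGreatest.isLUB
    ⟨⟨max a 0 ^ (k / (k - 1) - 1), rpow_nonneg (le_max_right a 0) _, ?_⟩, ?_⟩
  · rw [hobj, rpow_sub_one_mul_sub_rpow_div hpq, hvalue]
  · rintro v ⟨t, ht, rfl⟩
    rw [hobj, hvalue]
    gcongr
    exact mul_sub_rpow_div_le hpq ht a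
end

section
/- Let Z be a bounded real random variable under probability measure μ with essential infimum m, let δ > 0, and suppose p := μ(Z = m) < e^{−δ}. Define f(λ) = −λδ − λ·log E[exp(−Z/λ)] for λ > 0 and f(0) = m. Then the right-derivative of f at 0 equals −δ − log p > 0; in particular f(λ) > f(0) for all sufficiently small λ > 0, so λ = 0 is not a maximizer of f on [0,∞). -/
/-!
Write `g(λ) = E[exp(-(Z - m)/λ)]`. Pulling `exp(-m/λ)` out of the expectation gives
`f(λ) = m - λδ - λ log g(λ)`, so the difference quotient of `f` at `0` is `-δ - log g(λ)`.
Since `Z ≥ m` a.e., the integrand is bounded by `1` and tends to the indicator of `{Z = m}` as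
`λ → 0⁺`, so by dominated convergence `g(λ) → p < e^{-δ}`. Hence the difference quotient tends
to `-δ - log p` and is eventually positive.
-/

open MeasureTheory Filter Set Topology Real

lemma tendsto_exp_neg_div_nhdsGT_zero {y : ℝ} (hy : 0 < y) :
    Tendsto (fun t : ℝ => exp (-y / t)) (𝓝[>] 0) (𝓝 0) := by
  have hdiv : Tendsto (fun t : ℝ => y / t) (𝓝[>] 0) atTop := by
    simpa only [div_eq_mul_inv] using tendsto_inv_nhdsGT_zero.const_mul_atTop hy
  simp_rw [neg_div]
  exact tendsto_exp_atBot.comp (tendsto_neg_atTop_atBot.comp hdiv)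

lemma norm_exp_neg_sub_div_le_one {z m t : ℝ} (hz : m ≤ z) (ht : 0 ≤ t) :
    ‖exp (-(z - m) / t)‖ ≤ 1 := by
  rw [norm_of_nonneg (exp_nonneg _), exp_le_one_iff]
  exact div_nonpos_of_nonpos_of_nonneg (by linarith) ht

lemma exists_lt_of_eventually_slope_pos {f : ℝ → ℝ} {a : ℝ}
    (h : ∀ᶠ x in 𝓝[>] a, 0 < slope f a x) : ∃ b > a, ∀ x ∈ Ioc a b, f a < f x := by
  obtain ⟨b, hab, hsub⟩ := mem_nhdsGT_iff_exists_Ioc_subset.1 h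
  exact ⟨b, hab, fun x hx => (slope_pos_iff_of_le hx.1.le).1 (hsub hx)⟩

section LaplaceTransform

variable {Ω : Type*} [MeasurableSpace Ω] {μ : Measure Ω} {Z : Ω → ℝ} {m : ℝ}

lemma integral_exp_neg_div_eq (t : ℝ) :
    ∫ ω, exp (-Z ω / t) ∂μ = exp (-m / t) * ∫ ω, exp (-(Z ω - m) / t) ∂μ := by
  rw [← integral_const_mul]
  congr with ω
  rw [← exp_add]
  ring_nf

variable [IsFiniteMeasure μ]

lemma integrable_exp_neg_sub_div (hZ : Measurable Z) (hmZ : ∀ᵐ ω ∂μ, m ≤ Z ω) {t : ℝ}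
    (ht : 0 ≤ t) : Integrable (fun ω => exp (-(Z ω - m) / t)) μ :=
  (integrable_const (1 : ℝ)).mono'
    ((hZ.sub_const m).neg.div_const t).exp.aestronglyMeasurable
    (hmZ.mono fun _ hω => norm_exp_neg_sub_div_le_one hω ht)

lemma tendsto_integral_exp_neg_sub_div (hZ : Measurable Z) (hmZ : ∀ᵐ ω ∂μ, m ≤ Z ω) :
    Tendsto (fun t => ∫ ω, exp (-(Z ω - m) / t) ∂μ) (𝓝[>] 0)
      (𝓝 (μ.real {ω | Z ω = m})) := by
  have hset : MeasurableSet {ω | Z ω = m} := hZ (measurableSet_singleton m)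
  rw [← integral_indicator_one hset]
  refine tendsto_integral_filter_of_dominated_convergence (fun _ => 1)
    (Eventually.of_forall fun t => ((hZ.sub_const m).neg.div_const t).exp.aestronglyMeasurable)
    ?_ (integrable_const 1) ?_
  · filter_upwards [self_mem_nhdsWithin] with t (ht : 0 < t)
    exact hmZ.mono fun _ hω => norm_exp_neg_sub_div_le_one hω ht.le
  · filter_upwards [hmZ] with ω hω
    rcases hω.eq_or_lt with heq | hlt
    · simp [← heq]
    · rw [indicator_of_notMem (show ω ∉ {ω | Z ω = m} from hlt.ne')]
      exact tendsto_exp_neg_div_nhdsGT_zero (sub_pos.2 hlt)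

variable [NeZero μ]

lemma mul_log_integral_exp_neg_div (hZ : Measurable Z) (hmZ : ∀ᵐ ω ∂μ, m ≤ Z ω) {t : ℝ}
    (ht : 0 < t) :
    t * log (∫ ω, exp (-Z ω / t) ∂μ) = -m + t * log (∫ ω, exp (-(Z ω - m) / t) ∂μ) := by
  have hpos := integral_exp_pos (integrable_exp_neg_sub_div hZ hmZ ht.le)
  rw [integral_exp_neg_div_eq (m := m), log_mul (exp_ne_zero _) hpos.ne', log_exp, mul_add,
    mul_div_cancel₀ _ ht.ne']

end LaplaceTransform

theorem zero_not_maximizer_general {Ω : Type*} [MeasurableSpace Ω] (μ : Measure Ω)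
    [IsProbabilityMeasure μ] (Z : Ω → ℝ) (hZmeas : Measurable Z)
    (hZbdd : ∃ Cb : ℝ, ∀ ω, |Z ω| ≤ Cb)
    (m : ℝ) (hm : m = essInf Z μ)
    (p : ℝ) (hp : p = (μ {ω | Z ω = m}).toReal)
    (δ : ℝ) (hpδ : p < Real.exp (-δ))
    (f : ℝ → ℝ) (hf0 : f 0 = m)
    (hf : ∀ lam : ℝ, 0 < lam →
      f lam = -lam * δ - lam * Real.log (∫ ω, Real.exp (-Z ω / lam) ∂μ)) :
    (0 < p →
        HasDerivWithinAt f (-δ - Real.log p) (Set.Ici (0 : ℝ)) 0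
          ∧ 0 < -δ - Real.log p)
      ∧ (∃ ε > 0, ∀ lam ∈ Set.Ioc (0 : ℝ) ε, f 0 < f lam)
      ∧ ¬ IsMaxOn f (Set.Ici (0 : ℝ)) 0 := by
  obtain ⟨C, hC⟩ := hZbdd
  have hmZ : ∀ᵐ ω ∂μ, m ≤ Z ω :=
    hm ▸ ae_essInf_le ⟨-C, eventually_map.2 (ae_of_all _ fun ω => (abs_le.1 (hC ω)).1)⟩
  set g := fun t => ∫ ω, exp (-(Z ω - m) / t) ∂μ
  have hg : Tendsto g (𝓝[>] 0) (𝓝 p) := hp ▸ tendsto_integral_exp_neg_sub_div hZmeas hmZ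
  have hg_pos : ∀ t > 0, 0 < g t := fun t ht =>
    integral_exp_pos (integrable_exp_neg_sub_div hZmeas hmZ ht.le)
  have hslope : ∀ t > 0, slope f 0 t = -δ - log (g t) := fun t ht => by
    rw [slope_def_field, hf t ht, mul_log_integral_exp_neg_div hZmeas hmZ ht, hf0, sub_zero,
      div_eq_iff ht.ne']
    ring
  have hslope_pos : ∀ᶠ t in 𝓝[>] 0, 0 < slope f 0 t := by
    filter_upwards [hg.eventually_lt_const hpδ, self_mem_nhdsWithin] with t hgt (ht : 0 < t)
    rw [hslope t ht]
    exact sub_pos.2 ((log_lt_iff_lt_exp (hg_pos t ht)).2 hgt)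
  obtain ⟨ε, hε, hlt⟩ := exists_lt_of_eventually_slope_pos hslope_pos
  refine ⟨fun hp0 => ⟨?_, ?_⟩, ⟨ε, hε, hlt⟩,
    fun hmax => (hlt ε ⟨hε, le_rfl⟩).not_ge (hmax (mem_Ici.2 hε.le))⟩
  · refine HasDerivWithinAt.Ici_of_Ioi ((hasDerivWithinAt_iff_tendsto_slope' self_notMem_Ioi).2 ?_)
    exact (tendsto_const_nhds.sub ((continuousAt_log hp0.ne').tendsto.comp hg)).congr'
      (eventually_nhdsWithin_of_forall fun t ht => (hslope t ht).symm)
  · exact sub_pos.2 ((log_lt_iff_lt_exp hp0).2 hpδ)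

/-- Strict interiority of the dual optimizer: let `Z` be bounded on a probability
space, `m = ess inf Z`, `p = μ(Z = m)`, `δ > 0`, and suppose `p < e^{−δ}`.
With `f(λ) = −λδ − λ log E[exp(−Z/λ)]` for `λ > 0` and `f(0) = m`:
the right-derivative of `f` at `0` equals `−δ − log p`, which is positive
(stated for `p > 0`; the convention `log 0 = −∞` applies when `p = 0`);
in particular `f(λ) > f(0)` for all sufficiently small `λ > 0`, so `λ = 0`
is not a maximizer of `f` on `[0,∞)`. -/
theorem zero_not_maximizer {Ω : Type*} [MeasurableSpace Ω] (μ : Measure Ω)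
    [IsProbabilityMeasure μ] (Z : Ω → ℝ) (hZmeas : Measurable Z)
    (hZbdd : ∃ Cb : ℝ, ∀ ω, |Z ω| ≤ Cb)
    (m : ℝ) (hm : m = essInf Z μ)
    (p : ℝ) (hp : p = (μ {ω | Z ω = m}).toReal)
    (δ : ℝ) (hδ : 0 < δ) (hpδ : p < Real.exp (-δ))
    (f : ℝ → ℝ) (hf0 : f 0 = m)
    (hf : ∀ lam : ℝ, 0 < lam →
      f lam = -lam * δ - lam * Real.log (∫ ω, Real.exp (-Z ω / lam) ∂μ)) :
    (0 < p →
        HasDerivWithinAt f (-δ - Real.log p) (Set.Ici (0 : ℝ)) 0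
          ∧ 0 < -δ - Real.log p)
      ∧ (∃ ε > 0, ∀ lam ∈ Set.Ioc (0 : ℝ) ε, f 0 < f lam)
      ∧ ¬ IsMaxOn f (Set.Ici (0 : ℝ)) 0 :=
  zero_not_maximizer_general μ Z hZmeas hZbdd m hm p hp δ hpδ f hf0 hf
end

section
/- Let Z be an integrable random variable on probability space (Ω, F, μ) that is not μ-almost-surely constant, and suppose E[exp(−Z/λ)] < ∞ for all λ > 0. Then the function λ ↦ −λδ − λ·log E[exp(−Z/λ)] is strictly concave on (0, ∞) for any fixed δ ≥ 0. -/
/-!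
Writing `K` for the cumulant generating function of `-Z`, the objective is
`λ ↦ -λδ - λ K(1/λ)`. The second derivative of `K` at `t` is the variance of `Z` under the
measure tilted by `exp (-t Z)`, which is positive because `Z` is not a.s. constant, so `K` is
strictly convex; and the perspective `λ ↦ λ K(1/λ)` of a strictly convex function on `(0, ∞)`
is again strictly convex.
-/

open MeasureTheory ProbabilityTheory Real Set

namespace ProbabilityTheory

variable {Ω : Type*} [MeasurableSpace Ω] {μ : Measure Ω} {X : Ω → ℝ} {v : ℝ}

lemma integral_sq_sub_mul_exp_pos (hX : ¬ ∃ c : ℝ, X =ᵐ[μ] fun _ => c)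
    (hv : v ∈ interior (integrableExpSet X μ)) (c : ℝ) :
    0 < ∫ ω, (X ω - c) ^ 2 * exp (v * X ω) ∂μ := by
  have hint : Integrable (fun ω ↦ (X ω - c) ^ 2 * exp (v * X ω)) μ := by
    have h2 := integrable_pow_mul_exp_of_mem_interior_integrableExpSet hv 2
    have h1 := (integrable_pow_mul_exp_of_mem_interior_integrableExpSet hv 1).const_mul (2 * c)
    have h0 := (interior_subset (s := integrableExpSet X μ) hv).const_mul (c ^ 2)
    refine ((h2.sub h1).add h0).congr (ae_of_all _ fun ω ↦ ?_)
    simp only [Pi.add_apply, Pi.sub_apply, pow_one]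
    ring
  refine (integral_nonneg fun ω ↦ by positivity).lt_of_ne' fun h ↦ hX ⟨c, ?_⟩
  filter_upwards [(integral_eq_zero_iff_of_nonneg (fun ω ↦ by positivity) hint).1 h] with ω hω
  simpa [sub_eq_zero, (exp_pos _).ne'] using hω

lemma strictConvexOn_cgf (hX : ¬ ∃ c : ℝ, X =ᵐ[μ] fun _ => c) :
    StrictConvexOn ℝ (interior (integrableExpSet X μ)) (cgf X μ) := by
  have hμ : μ ≠ 0 := by
    rintro rfl
    exact hX ⟨0, by simp [Filter.EventuallyEq]⟩
  refine strictConvexOn_of_deriv2_pos convex_integrableExpSet.interior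
    analyticOn_cgf.continuousOn fun v hv ↦ ?_
  rw [interior_interior] at hv
  rw [← iteratedDeriv_eq_iterate, iteratedDeriv_two_cgf_eq_integral hv]
  exact div_pos (integral_sq_sub_mul_exp_pos hX hv _)
    (mgf_pos' hμ (interior_subset (s := integrableExpSet X μ) hv))

end ProbabilityTheory

lemma StrictConvexOn.perspective {f : ℝ → ℝ} (hf : StrictConvexOn ℝ (Ioi 0) f) :
    StrictConvexOn ℝ (Ioi 0) fun x ↦ x * f x⁻¹ := by
  refine LinearOrder.strictConvexOn_of_lt (convex_Ioi 0) ?_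
  intro x hx y hy hxy a b ha hb hab
  rw [mem_Ioi] at hx hy
  simp only [smul_eq_mul]
  set z := a * x + b * y
  have hz : 0 < z := by positivity
  have key := hf.2 (inv_pos.2 hx) (inv_pos.2 hy) (inv_strictAnti₀ hx hxy).ne'
    (by positivity : 0 < a * x / z) (by positivity : 0 < b * y / z)
    (by field_simp; rfl)
  have hcomb : a * x / z * x⁻¹ + b * y / z * y⁻¹ = z⁻¹ := by
    field_simp; simp [← hab]
  simp only [smul_eq_mul, hcomb] at key
  calc z * f z⁻¹ < z * (a * x / z * f x⁻¹ + b * y / z * f y⁻¹) :=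
        mul_lt_mul_of_pos_left key hz
    _ = a * (x * f x⁻¹) + b * (y * f y⁻¹) := by field_simp

theorem kl_dual_strictConcave_general {Ω : Type*} [MeasurableSpace Ω] (μ : Measure Ω) (Z : Ω → ℝ)
    (hnondeg : ¬ ∃ c : ℝ, Z =ᵐ[μ] fun _ => c)
    (hexp : ∀ lam : ℝ, 0 < lam → Integrable (fun ω => Real.exp (-Z ω / lam)) μ)
    (δ : ℝ) :
    StrictConcaveOn ℝ (Set.Ioi (0 : ℝ))
      (fun lam => -lam * δ - lam * Real.log (∫ ω, Real.exp (-Z ω / lam) ∂μ)) := by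
  have hnondeg_neg : ¬ ∃ c : ℝ, -Z =ᵐ[μ] fun _ => c := fun ⟨c, hc⟩ ↦
    hnondeg ⟨-c, by filter_upwards [hc] with ω hω; simp [← hω]⟩
  have hIoi : Ioi 0 ⊆ interior (integrableExpSet (-Z) μ) := by
    refine interior_maximal (fun t ht ↦ ?_) isOpen_Ioi
    simpa [integrableExpSet, div_eq_inv_mul] using hexp t⁻¹ (inv_pos.2 ht)
  have hlinear : ConcaveOn ℝ (Ioi 0) fun lam : ℝ ↦ -lam * δ :=
    ⟨convex_Ioi 0, fun x _ y _ a b _ _ _ ↦ le_of_eq (by simp only [smul_eq_mul]; ring)⟩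
  refine (hlinear.sub_strictConvexOn
    (((strictConvexOn_cgf hnondeg_neg).subset hIoi (convex_Ioi 0)).perspective)).congr
    fun lam _ ↦ ?_
  simp [cgf, mgf, div_eq_inv_mul]

/-- Strict concavity of the KL dual objective: if `Z` is integrable on a
probability space, not `μ`-a.s. constant, and `exp(−Z/λ)` is integrable for
every `λ > 0`, then for any fixed `δ ≥ 0` the map
`λ ↦ −λδ − λ·log E[exp(−Z/λ)]` is strictly concave on `(0, ∞)`. -/
theorem kl_dual_strictConcave {Ω : Type*} [MeasurableSpace Ω] (μ : Measure Ω)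
    [IsProbabilityMeasure μ] (Z : Ω → ℝ) (hZ : Integrable Z μ)
    (hnondeg : ¬ ∃ c : ℝ, Z =ᵐ[μ] fun _ => c)
    (hexp : ∀ lam : ℝ, 0 < lam → Integrable (fun ω => Real.exp (-Z ω / lam)) μ)
    (δ : ℝ) (hδ : 0 ≤ δ) :
    StrictConcaveOn ℝ (Set.Ioi (0 : ℝ))
      (fun lam => -lam * δ - lam * Real.log (∫ ω, Real.exp (-Z ω / lam) ∂μ)) :=
  kl_dual_strictConcave_general μ Z hnondeg hexp δ
end

section
/- KL duality for finitely supported distributions: let μ = (p_1,…,p_d) be a probability vector with all p_i > 0, let z_1,…,z_d ∈ ℝ, and let δ > 0. Then the minimum of Σ_i q_i z_i over probability vectors q = (q_1,…,q_d) with Σ_i q_i log(q_i/p_i) ≤ δ equals sup over λ ≥ 0 of ( −λδ − λ·log Σ_i p_i exp(−z_i/λ) ), where the expression at λ = 0 is interpreted as min_i z_i restricted to indices with p_i > 0. -/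
/-!
Weak duality is Gibbs' inequality against the tilted law `g_β ∝ p e^{-β z}` with `β = 1/λ`:
`0 ≤ KL(q‖g_β) = KL(q‖p) + β⟨q, z⟩ + log Z(β)`, where `Z(β) = Σ p_i e^{-β z_i}`.
For strong duality, `β ↦ KL(g_β‖p)` is continuous, vanishes at `β = 0`, and tends to
`KL(q_∞‖p)` as `β → ∞`, where `q_∞` is `p` conditioned on the minimisers of `z`.
If `KL(q_∞‖p) ≤ δ`, then `q_∞` is feasible with value `min z`, the dual value at `λ = 0`.
Otherwise the intermediate value theorem gives `β > 0` with `KL(g_β‖p) = δ`, and the identity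
above with `q = g_β` shows that `⟨g_β, z⟩` is the dual objective at `λ = 1/β`.
-/

open Real Finset Filter Topology

theorem csInf_eq_csSup_of_forall_le_of_mem {α : Type*} [ConditionallyCompleteLattice α]
    {A B : Set α} {x : α}
    (h : ∀ w ∈ B, ∀ v ∈ A, w ≤ v) (hxA : x ∈ A) (hxB : x ∈ B) : sInf A = sSup B :=
  (IsLeast.csInf_eq ⟨hxA, h x hxB⟩).trans
    (IsGreatest.csSup_eq ⟨hxB, fun w hw => h w hw x hxA⟩).symm

theorem mul_log_div_eq_sub {c : ℝ} (hc : c ≠ 0) (x : ℝ) :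
    x * log (x / c) = x * log x - x * log c := by
  rcases eq_or_ne x 0 with rfl | hx
  · simp
  · rw [log_div hx hc, mul_sub]

theorem continuous_mul_log_div {c : ℝ} (hc : c ≠ 0) : Continuous fun x => x * log (x / c) := by
  simp_rw [mul_log_div_eq_sub hc]
  exact continuous_mul_log.sub (continuous_id.mul continuous_const)

theorem sub_le_mul_log_div {x y : ℝ} (hx : 0 ≤ x) (hy : 0 < y) : x - y ≤ x * log (x / y) := by
  have h := mul_nonneg hy.le (InformationTheory.klFun_nonneg (div_nonneg hx hy.le))
  rw [InformationTheory.klFun_apply] at h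
  have : y * (x / y * log (x / y) + 1 - x / y) = x * log (x / y) + y - x := by
    field_simp
  linarith

theorem iInf_le_sum_mul {ι : Type*} [Fintype ι] {q : ι → ℝ} (z : ι → ℝ) (hq0 : ∀ i, 0 ≤ q i)
    (hq1 : ∑ i, q i = 1) : ⨅ i, z i ≤ ∑ i, q i * z i :=
  calc ⨅ i, z i = ∑ i, q i * ⨅ j, z j := by rw [← sum_mul, hq1, one_mul]
    _ ≤ ∑ i, q i * z i := sum_le_sum fun i _ =>
      mul_le_mul_of_nonneg_left (ciInf_le (Set.finite_range z).bddBelow i) (hq0 i)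

theorem tendsto_exp_neg_mul_atTop {x : ℝ} (hx : 0 ≤ x) :
    Tendsto (fun β => exp (-(β * x))) atTop (𝓝 (if x = 0 then 1 else 0)) := by
  rcases hx.eq_or_lt with rfl | hx
  · simp
  · rw [if_neg hx.ne']
    exact tendsto_exp_atBot.comp (tendsto_neg_atTop_atBot.comp (tendsto_id.atTop_mul_const hx))

section

variable {ι : Type*} [DecidableEq ι] {p : ι → ℝ}

noncomputable def condOn (p : ι → ℝ) (s : Finset ι) : ι → ℝ :=
  fun i => if i ∈ s then p i / ∑ j ∈ s, p j else 0

theorem condOn_nonneg {s : Finset ι} (hp : ∀ i, 0 ≤ p i) (i : ι) : 0 ≤ condOn p s i := by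
  unfold condOn
  split_ifs
  · exact div_nonneg (hp i) (sum_nonneg fun j _ => hp j)
  · exact le_rfl

theorem sum_condOn [Fintype ι] {s : Finset ι} (hs : ∑ j ∈ s, p j ≠ 0) :
    ∑ i, condOn p s i = 1 := by
  simp only [condOn]
  rw [← sum_filter, filter_mem_eq_inter, univ_inter, ← sum_div, div_self hs]

theorem sum_condOn_mul [Fintype ι] (z : ι → ℝ) {s : Finset ι} {c : ℝ}
    (hs : ∑ j ∈ s, p j ≠ 0) (hz : ∀ i ∈ s, z i = c) : ∑ i, condOn p s i * z i = c := by
  calc ∑ i, condOn p s i * z i = ∑ i, condOn p s i * c := by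
        refine sum_congr rfl fun i _ => ?_
        by_cases hi : i ∈ s <;> simp [condOn, hi, hz]
    _ = c := by rw [← sum_mul, sum_condOn hs, one_mul]

end

section

variable {ι : Type*} [Fintype ι]

noncomputable def relEntropy (q p : ι → ℝ) : ℝ := ∑ i, q i * log (q i / p i)

theorem relEntropy_self (p : ι → ℝ) : relEntropy p p = 0 :=
  sum_eq_zero fun i _ => by
    rcases eq_or_ne (p i) 0 with h | h <;> simp [h]

theorem continuous_relEntropy {p : ι → ℝ} (hp : ∀ i, p i ≠ 0) :
    Continuous fun q => relEntropy q p :=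
  continuous_finsetSum _ fun i _ => (continuous_mul_log_div (hp i)).comp (continuous_apply i)

theorem relEntropy_nonneg {q r : ι → ℝ} (hq0 : ∀ i, 0 ≤ q i) (hq1 : ∑ i, q i = 1)
    (hr : ∀ i, 0 < r i) (hr1 : ∑ i, r i = 1) : 0 ≤ relEntropy q r :=
  calc (0 : ℝ) = ∑ i, (q i - r i) := by rw [sum_sub_distrib, hq1, hr1, sub_self]
    _ ≤ relEntropy q r := sum_le_sum fun i _ => sub_le_mul_log_div (hq0 i) (hr i)

noncomputable def partitionFn (p z : ι → ℝ) (β : ℝ) : ℝ := ∑ i, p i * exp (-(β * z i))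

noncomputable def gibbs (p z : ι → ℝ) (β : ℝ) : ι → ℝ :=
  fun i => p i * exp (-(β * z i)) / partitionFn p z β

variable {p : ι → ℝ} (z : ι → ℝ) (β : ℝ)

theorem partitionFn_pos [Nonempty ι] (hp : ∀ i, 0 < p i) : 0 < partitionFn p z β :=
  sum_pos (fun i _ => mul_pos (hp i) (exp_pos _)) univ_nonempty

theorem partitionFn_inv (lam : ℝ) :
    partitionFn p z lam⁻¹ = ∑ i, p i * exp (-z i / lam) := by
  simp only [partitionFn, neg_div, inv_mul_eq_div]

theorem gibbs_pos [Nonempty ι] (hp : ∀ i, 0 < p i) (i : ι) : 0 < gibbs p z β i :=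
  div_pos (mul_pos (hp i) (exp_pos _)) (partitionFn_pos z β hp)

theorem sum_gibbs [Nonempty ι] (hp : ∀ i, 0 < p i) : ∑ i, gibbs p z β i = 1 := by
  simp only [gibbs, ← sum_div]
  exact div_self (partitionFn_pos z β hp).ne'

theorem gibbs_zero (hp1 : ∑ i, p i = 1) : gibbs p z 0 = p := by
  ext i
  simp [gibbs, partitionFn, hp1]

theorem continuous_gibbs [Nonempty ι] (hp : ∀ i, 0 < p i) : Continuous (gibbs p z) := by
  refine continuous_pi fun i => Continuous.div (by fun_prop) (by unfold partitionFn; fun_prop)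
    fun β => (partitionFn_pos z β hp).ne'

theorem gibbs_sub_const (c : ℝ) : gibbs p (fun i => z i - c) β = gibbs p z β := by
  have h : ∀ i, p i * exp (-(β * (z i - c))) = p i * exp (-(β * z i)) * exp (β * c) := by
    intro i
    rw [mul_assoc, ← exp_add]
    ring_nf
  ext i
  simp only [gibbs, partitionFn, h, ← sum_mul]
  exact mul_div_mul_right _ _ (exp_ne_zero _)

theorem relEntropy_gibbs [Nonempty ι] (hp : ∀ i, 0 < p i) {q : ι → ℝ} (hq1 : ∑ i, q i = 1) :
    relEntropy q (gibbs p z β) =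
      relEntropy q p + β * ∑ i, q i * z i + log (partitionFn p z β) := by
  have hZ := (partitionFn_pos z β hp).ne'
  have hterm : ∀ i, q i * log (q i / gibbs p z β i) =
      q i * log (q i / p i) + β * (q i * z i) + q i * log (partitionFn p z β) := by
    intro i
    rcases eq_or_ne (q i) 0 with h | h
    · simp [h]
    · rw [gibbs, div_div_eq_mul_div, log_div (mul_ne_zero h hZ) (mul_pos (hp i) (exp_pos _)).ne',
        log_mul h hZ, log_mul (hp i).ne' (exp_pos _).ne', log_exp, log_div h (hp i).ne']
      ring
  simp only [relEntropy, hterm, sum_add_distrib, ← mul_sum, ← sum_mul, hq1, one_mul]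

theorem relEntropy_gibbs_left [Nonempty ι] (hp : ∀ i, 0 < p i) :
    relEntropy (gibbs p z β) p = -(β * ∑ i, gibbs p z β i * z i) - log (partitionFn p z β) := by
  have h := relEntropy_gibbs z β hp (sum_gibbs z β hp)
  rw [relEntropy_self] at h
  linarith

theorem tendsto_gibbs_atTop [Nonempty ι] [DecidableEq ι] (hp : ∀ i, 0 < p i) :
    Tendsto (gibbs p z) atTop (𝓝 (condOn p {i | z i = ⨅ j, z j})) := by
  set m := ⨅ j, z j
  set s : Finset ι := {i | z i = m}
  have hnum : ∀ i, Tendsto (fun β => p i * exp (-(β * (z i - m)))) atTop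
      (𝓝 (if i ∈ s then p i else 0)) := fun i => by
    have := (tendsto_exp_neg_mul_atTop
      (sub_nonneg.2 (ciInf_le (Set.finite_range z).bddBelow i))).const_mul (p i)
    simpa [s, sub_eq_zero] using this
  have hden : Tendsto (partitionFn p fun i => z i - m) atTop (𝓝 (∑ j ∈ s, p j)) := by
    have := tendsto_finsetSum univ fun i _ => hnum i
    rwa [sum_ite_mem, univ_inter] at this
  obtain ⟨i₀, hi₀⟩ := exists_eq_ciInf_of_finite (f := z)
  have hs : 0 < ∑ j ∈ s, p j := sum_pos (fun j _ => hp j) ⟨i₀, by simp [s, m, hi₀]⟩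
  rw [show gibbs p z = gibbs p (fun i => z i - m) from
    funext fun β => (gibbs_sub_const z β m).symm]
  refine tendsto_pi_nhds.2 fun i => ?_
  simpa [condOn, gibbs, ite_div, Pi.div_def] using (hnum i).div hden hs.ne'

noncomputable def klDual (p z : ι → ℝ) (δ lam : ℝ) : ℝ :=
  -lam * δ - lam * log (∑ i, p i * exp (-z i / lam))

theorem klDual_le_sum_mul [Nonempty ι] (hp : ∀ i, 0 < p i) {q : ι → ℝ} {δ lam : ℝ}
    (hq0 : ∀ i, 0 ≤ q i) (hq1 : ∑ i, q i = 1) (hqδ : relEntropy q p ≤ δ) (hlam : 0 < lam) :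
    klDual p z δ lam ≤ ∑ i, q i * z i := by
  have h := relEntropy_nonneg hq0 hq1 (gibbs_pos z lam⁻¹ hp) (sum_gibbs z lam⁻¹ hp)
  rw [relEntropy_gibbs z lam⁻¹ hp hq1, partitionFn_inv] at h
  have h' := mul_nonneg hlam.le h
  rw [mul_add, mul_add, ← mul_assoc, mul_inv_cancel₀ hlam.ne', one_mul] at h'
  unfold klDual
  linarith [mul_le_mul_of_nonneg_left hqδ hlam.le]

theorem klDual_inv_eq_sum_gibbs_mul [Nonempty ι] (hp : ∀ i, 0 < p i) (hβ : 0 < β)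
    {δ : ℝ} (hδ : relEntropy (gibbs p z β) p = δ) :
    klDual p z δ β⁻¹ = ∑ i, gibbs p z β i * z i := by
  rw [relEntropy_gibbs_left z β hp] at hδ
  rw [klDual, ← partitionFn_inv, inv_inv, ← hδ]
  field_simp
  ring

theorem exists_relEntropy_gibbs_eq [Nonempty ι] [DecidableEq ι] (hp : ∀ i, 0 < p i)
    (hp1 : ∑ i, p i = 1) {δ : ℝ} (hδ : 0 < δ)
    (hlt : δ < relEntropy (condOn p {i | z i = ⨅ j, z j}) p) :
    ∃ β, 0 < β ∧ relEntropy (gibbs p z β) p = δ := by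
  set K := fun β => relEntropy (gibbs p z β) p
  have hKL := continuous_relEntropy fun i => (hp i).ne'
  have hK : Continuous K := hKL.comp (continuous_gibbs z hp)
  have hK0 : K 0 = 0 := by simp only [K, gibbs_zero z hp1, relEntropy_self]
  have hKlim := (hKL.tendsto _).comp (tendsto_gibbs_atTop z hp)
  obtain ⟨b, hb, hb0⟩ :=
    ((hKlim.eventually (eventually_gt_nhds hlt)).and (eventually_ge_atTop 0)).exists
  obtain ⟨β, hβ, hKβ⟩ := intermediate_value_Icc hb0 hK.continuousOn
    (show δ ∈ Set.Icc (K 0) (K b) from ⟨by rw [hK0]; exact hδ.le, hb.le⟩)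
  refine ⟨β, hβ.1.lt_of_ne ?_, hKβ⟩
  rintro rfl
  exact hδ.ne' (hKβ.symm.trans hK0)

theorem exists_feasible_eq_klDual [Nonempty ι] [DecidableEq ι] (hp : ∀ i, 0 < p i)
    (hp1 : ∑ i, p i = 1) {δ : ℝ} (hδ : 0 < δ) :
    ∃ q : ι → ℝ, (∀ i, 0 ≤ q i) ∧ ∑ i, q i = 1 ∧ relEntropy q p ≤ δ ∧
      ((∃ lam, 0 < lam ∧ ∑ i, q i * z i = klDual p z δ lam) ∨ ∑ i, q i * z i = ⨅ i, z i) := by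
  set s : Finset ι := {i | z i = ⨅ j, z j}
  by_cases hs : relEntropy (condOn p s) p ≤ δ
  · obtain ⟨i₀, hi₀⟩ := exists_eq_ciInf_of_finite (f := z)
    have hps : ∑ j ∈ s, p j ≠ 0 := (sum_pos (fun j _ => hp j) ⟨i₀, by simp [s, hi₀]⟩).ne'
    exact ⟨condOn p s, condOn_nonneg (fun i => (hp i).le), sum_condOn hps, hs,
      Or.inr (sum_condOn_mul z hps fun i hi => by simpa [s] using hi)⟩
  · obtain ⟨β, hβ, hβδ⟩ := exists_relEntropy_gibbs_eq z hp hp1 hδ (not_le.1 hs)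
    exact ⟨gibbs p z β, fun i => (gibbs_pos z β hp i).le, sum_gibbs z β hp, hβδ.le,
      Or.inl ⟨β⁻¹, inv_pos.2 hβ, (klDual_inv_eq_sum_gibbs_mul z β hp hβ hβδ).symm⟩⟩

end

/-- KL duality for finitely supported distributions: with a probability vector
`p` (all entries positive), values `z_i`, and `δ > 0`, the minimum of `Σ q_i z_i`
over probability vectors `q` with `Σ q_i log(q_i/p_i) ≤ δ` equals the supremum
over `λ ≥ 0` of `−λδ − λ log Σ p_i exp(−z_i/λ)`, where the value at `λ = 0` is
interpreted as `min_i z_i` (all indices have `p_i > 0`).  (The convention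
`0·log(0/p) = 0` holds for `Real.log` since `0 * _ = 0`.) -/
theorem finite_kl_duality (d : ℕ) (p z : Fin d → ℝ)
    (hp : ∀ i, 0 < p i) (hp1 : ∑ i, p i = 1) (δ : ℝ) (hδ : 0 < δ) :
    sInf {v : ℝ | ∃ q : Fin d → ℝ, (∀ i, 0 ≤ q i) ∧ (∑ i, q i = 1) ∧
          (∑ i, q i * Real.log (q i / p i)) ≤ δ ∧ v = ∑ i, q i * z i}
      = sSup {w : ℝ |
          (∃ lam : ℝ, 0 < lam ∧
            w = -lam * δ - lam * Real.log (∑ i, p i * Real.exp (-z i / lam)))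
          ∨ w = ⨅ i, z i} := by
  have : Nonempty (Fin d) := univ_nonempty_iff.1 (nonempty_of_sum_ne_zero (hp1 ▸ one_ne_zero))
  obtain ⟨q, hq0, hq1, hqδ, hq⟩ := exists_feasible_eq_klDual z hp hp1 hδ
  refine csInf_eq_csSup_of_forall_le_of_mem ?_ ⟨q, hq0, hq1, hqδ, rfl⟩ hq
  rintro w (⟨lam, hlam, rfl⟩ | rfl) v ⟨q', hq0', hq1', hq'δ, rfl⟩
  · exact klDual_le_sum_mul z hp hq0' hq1' hq'δ hlam
  · exact iInf_le_sum_mul z hq0' hq1'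
end

section
/- Lagrangian inner minimization for Cressie–Read: fix k > 1, k* = k/(k−1), λ > 0, β, z ∈ ℝ. Then inf over x ≥ 0 of ( z·x + λ·(x^k − k·x + k − 1)/(k(k−1)) − β·x ) equals −λ·( (1/k)·((k−1)(β−z)/λ + 1)_+^{k*} − 1/k ). -/
/-!
Writing `t = (k-1)(β-z)/λ + 1`, the objective equals `λ/(k(k-1)) · (x^k - k t x) + λ/k`, an
increasing affine image of `x^k - k t x`. By Young's inequality with exponents `k` and `k*`,
`k t x ≤ k t₊ x ≤ x^k + (k-1) t₊^{k*}` for `x ≥ 0`, with equality at `x = t₊^{1/(k-1)}`.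
-/

open Set

namespace Real

theorem mul_mul_le_rpow_add_sub_one_mul_rpow_conjExponent {p x s : ℝ} (hp : 1 < p)
    (hx : 0 ≤ x) (hs : 0 ≤ s) :
    p * (x * s) ≤ x ^ p + (p - 1) * s ^ (p / (p - 1)) := by
  have hp0 : 0 < p := by linarith
  have hp1 : 0 < p - 1 := by linarith
  have young := young_inequality_of_nonneg hx hs (HolderConjugate.conjExponent hp)
  have hrhs : p * (x ^ p / p + s ^ conjExponent p / conjExponent p)
      = x ^ p + (p - 1) * s ^ (p / (p - 1)) := by
    rw [conjExponent]
    field_simp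
  rw [← hrhs]
  exact mul_le_mul_of_nonneg_left young hp0.le

theorem rpow_sub_mul_rpow_inv_sub_one {p s : ℝ} (hp : 1 < p) (hs : 0 ≤ s) :
    (s ^ (1 / (p - 1))) ^ p - p * s * s ^ (1 / (p - 1)) = -(p - 1) * s ^ (p / (p - 1)) := by
  have hp1 : p - 1 ≠ 0 := by linarith
  have hpow : (s ^ (1 / (p - 1))) ^ p = s ^ (p / (p - 1)) := by
    rw [← rpow_mul hs, one_div_mul_eq_div]
  have hmul : s * s ^ (1 / (p - 1)) = s ^ (p / (p - 1)) := by
    rw [← rpow_one_add' hs (by positivity)]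
    congr 1
    field_simp
    ring
  rw [hpow, mul_assoc, hmul]
  ring

theorem isLeast_rpow_sub_mul_image_Ici {p : ℝ} (hp : 1 < p) (t : ℝ) :
    IsLeast ((fun x => x ^ p - p * t * x) '' Ici 0) (-(p - 1) * max t 0 ^ (p / (p - 1))) := by
  set s := max t 0
  have hs : 0 ≤ s := le_max_right t 0
  refine ⟨⟨s ^ (1 / (p - 1)), rpow_nonneg hs _, ?_⟩, ?_⟩
  · have hts : t * s ^ (1 / (p - 1)) = s * s ^ (1 / (p - 1)) := by
      rcases le_total t 0 with ht | ht
      · rw [show s = 0 from max_eq_right ht, zero_rpow (one_div_pos.2 (sub_pos.2 hp)).ne']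
        ring
      · rw [show s = t from max_eq_left ht]
    simp only [mul_assoc, hts]
    rw [← mul_assoc]
    exact rpow_sub_mul_rpow_inv_sub_one hp hs
  · rintro _ ⟨x, hx, rfl⟩
    have hx : 0 ≤ x := hx
    have young := mul_mul_le_rpow_add_sub_one_mul_rpow_conjExponent hp hx hs
    have hts : p * t * x ≤ p * (x * s) := by
      rw [mul_comm x, ← mul_assoc]
      exact mul_le_mul_of_nonneg_right
        (mul_le_mul_of_nonneg_left (le_max_left t 0) (by linarith)) hx
    simp only
    linarith

end Real

/-- Lagrangian inner minimization for Cressie–Read: for `k > 1`, `k* = k/(k−1)`,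
`λ > 0`, `β, z ∈ ℝ`,
`inf_{x ≥ 0} ( z·x + λ·(x^k − kx + k−1)/(k(k−1)) − β·x )
  = −λ·((1/k)·((k−1)(β−z)/λ + 1)_+^{k*} − 1/k)`. -/
theorem cressieRead_lagrangian_inner (k lam β z : ℝ) (hk : 1 < k) (hlam : 0 < lam) :
    IsGLB {v : ℝ | ∃ x : ℝ, 0 ≤ x ∧
        v = z * x + lam * ((x ^ k - k * x + k - 1) / (k * (k - 1))) - β * x}
      (-(lam * ((1 / k) * (max ((k - 1) * (β - z) / lam + 1) 0) ^ (k / (k - 1))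
          - 1 / k))) := by
  have hk1 : 0 < k - 1 := by linarith
  set t := (k - 1) * (β - z) / lam + 1
  set rescale : ℝ → ℝ := fun v => lam / (k * (k - 1)) * v + lam / k
  have hobjective_eq (x : ℝ) : z * x + lam * ((x ^ k - k * x + k - 1) / (k * (k - 1))) - β * x
      = rescale (x ^ k - k * t * x) := by
    simp only [rescale, t]
    field_simp
    ring
  have hobjective : {v : ℝ | ∃ x : ℝ, 0 ≤ x ∧
      v = z * x + lam * ((x ^ k - k * x + k - 1) / (k * (k - 1))) - β * x}
      = rescale '' ((fun x => x ^ k - k * t * x) '' Ici 0) := by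
    ext v
    simp only [image_image, mem_ofPred_eq, mem_image, mem_Ici, hobjective_eq, eq_comm]
  have hmono : Monotone rescale := fun a b hab => by
    simp only [rescale]
    gcongr
  have hvalue : rescale (-(k - 1) * max t 0 ^ (k / (k - 1)))
      = -(lam * ((1 / k) * max t 0 ^ (k / (k - 1)) - 1 / k)) := by
    simp only [rescale]
    field_simp
    ring
  rw [hobjective, ← hvalue]
  exact (hmono.map_isLeast (Real.isLeast_rpow_sub_mul_image_Ici hk t)).isGLB
end

section
/- rMLMC telescoping unbiasedness: let (Δ_n)_{n ≥ n_0} be real random variables with Σ_{n ≥ n_0} E|Δ_n| < ∞, let N be an independent integer random variable supported on {n_0, n_0+1, …} with pmf p(n) > 0 for all n ≥ n_0, and let Y_0 be integrable. Then the estimator E := Y_0 + Δ_N / p(N) satisfies E[E] = E[Y_0] + Σ_{n ≥ n_0} E[Δ_n]. -/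
/-
Pointwise, `Δ_N / p(N) = ∑ₙ 1{N = n} Δₙ / p(n)` with exactly one nonzero term. Independence of `N`
and `Δₙ` gives `E[1{N = n} Δₙ] = p(n) E[Δₙ]` and `E|1{N = n} Δₙ / p(n)| = E|Δₙ|`, so the `L¹` norms
of the terms are summable: `Δ_N / p(N)` is integrable and the series may be integrated termwise.
-/

open MeasureTheory ProbabilityTheory

section

variable {α ι : Type*} [MeasurableSpace α] {μ : Measure α} [Countable ι]
  {F : ι → α → ℝ} {f : α → ℝ}

theorem integrable_of_hasSum_of_summable_integral_norm (hF_int : ∀ i, Integrable (F i) μ)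
    (hF_sum : Summable fun i ↦ ∫ a, ‖F i a‖ ∂μ) (hf : ∀ᵐ a ∂μ, HasSum (F · a) (f a)) :
    Integrable f μ := by
  refine ⟨aestronglyMeasurable_of_tendsto_ae _
    (fun s ↦ Finset.aestronglyMeasurable_fun_sum s fun i _ ↦ (hF_int i).1) hf, ?_⟩
  have h_le : ∀ᵐ a ∂μ, ‖f a‖ₑ ≤ ∑' i, ‖F i a‖ₑ := by
    filter_upwards [hf] with a ha
    exact ha.tsum_eq ▸ enorm_tsum_le_tsum_enorm
  calc ∫⁻ a, ‖f a‖ₑ ∂μ ≤ ∫⁻ a, ∑' i, ‖F i a‖ₑ ∂μ := lintegral_mono_ae h_le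
    _ = ∑' i, ENNReal.ofReal (∫ a, ‖F i a‖ ∂μ) := by
      rw [lintegral_tsum fun i ↦ (hF_int i).1.enorm]
      simp_rw [ofReal_integral_norm_eq_lintegral_enorm (hF_int _)]
    _ = ENNReal.ofReal (∑' i, ∫ a, ‖F i a‖ ∂μ) :=
      (ENNReal.ofReal_tsum_of_nonneg (fun i ↦ integral_nonneg fun _ ↦ norm_nonneg _) hF_sum).symm
    _ < ⊤ := ENNReal.ofReal_lt_top

theorem hasSum_integral_of_hasSum_of_summable_integral_norm (hF_int : ∀ i, Integrable (F i) μ)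
    (hF_sum : Summable fun i ↦ ∫ a, ‖F i a‖ ∂μ) (hf : ∀ᵐ a ∂μ, HasSum (F · a) (f a)) :
    HasSum (fun i ↦ ∫ a, F i a ∂μ) (∫ a, f a ∂μ) := by
  rw [integral_congr_ae (hf.mono fun a ha ↦ ha.tsum_eq.symm)]
  exact hasSum_integral_of_summable_integral_norm hF_int hF_sum

end

theorem ProbabilityTheory.IndepFun.setIntegral_preimage_eq_mul {Ω β : Type*}
    {mΩ : MeasurableSpace Ω} [MeasurableSpace β] {μ : Measure Ω} {M : Ω → β} {X : Ω → ℝ}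
    (hMX : IndepFun M X μ) (hM : Measurable M) (hX : AEMeasurable X μ)
    {s : Set β} (hs : MeasurableSet s) :
    ∫ ω in M ⁻¹' s, X ω ∂μ = μ.real (M ⁻¹' s) * ∫ ω, X ω ∂μ :=
  Indep.setIntegral_eq_mul (f := id) hM.comap_le ((IndepFun_iff_Indep _ _ _).1 hMX) hX
    ⟨s, hs, rfl⟩ aestronglyMeasurable_id

theorem hasSum_indicator_preimage_singleton {Ω ι E : Type*} [AddCommMonoid E] [TopologicalSpace E]
    (M : Ω → ι) (X : ι → Ω → E) (ω : Ω) :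
    HasSum (fun i ↦ (M ⁻¹' {i}).indicator (X i) ω) (X (M ω) ω) := by
  have h := hasSum_single (f := fun i ↦ (M ⁻¹' {i}).indicator (X i) ω) (M ω)
    fun i hi ↦ Set.indicator_of_notMem (s := M ⁻¹' {i}) (Ne.symm hi) _
  simpa using h

section RandomIndex

variable {Ω ι : Type*} [MeasurableSpace Ω] {μ : Measure Ω} [MeasurableSpace ι]
  [MeasurableSingletonClass ι] {M : Ω → ι} {X : ι → Ω → ℝ}

theorem integral_indicator_preimage_singleton (hM : Measurable M) (hX : ∀ i, Integrable (X i) μ)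
    (hind : ∀ i, IndepFun M (X i) μ) (i : ι) :
    ∫ ω, (M ⁻¹' {i}).indicator (X i) ω ∂μ = μ.real (M ⁻¹' {i}) * ∫ ω, X i ω ∂μ := by
  rw [integral_indicator (hM (measurableSet_singleton i))]
  exact (hind i).setIntegral_preimage_eq_mul hM (hX i).aemeasurable (measurableSet_singleton i)

theorem integrable_and_hasSum_integral_of_indepFun [Countable ι] (hM : Measurable M)
    (hX : ∀ i, Integrable (X i) μ) (hind : ∀ i, IndepFun M (X i) μ)
    (hsum : Summable fun i ↦ μ.real (M ⁻¹' {i}) * ∫ ω, ‖X i ω‖ ∂μ) :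
    Integrable (fun ω ↦ X (M ω) ω) μ ∧
      HasSum (fun i ↦ μ.real (M ⁻¹' {i}) * ∫ ω, X i ω ∂μ) (∫ ω, X (M ω) ω ∂μ) := by
  set F : ι → Ω → ℝ := fun i ↦ (M ⁻¹' {i}).indicator (X i)
  have hF_int : ∀ i, Integrable (F i) μ := fun i ↦ (hX i).indicator (hM (measurableSet_singleton i))
  have hF_sum : Summable fun i ↦ ∫ ω, ‖F i ω‖ ∂μ := by
    convert hsum using 2 with i
    simp_rw [F, norm_indicator_eq_indicator_norm]
    exact integral_indicator_preimage_singleton (X := fun i ω ↦ ‖X i ω‖) hM (fun i ↦ (hX i).norm)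
      (fun i ↦ (hind i).comp measurable_id measurable_norm) i
  have hF : ∀ᵐ ω ∂μ, HasSum (F · ω) (X (M ω) ω) :=
    ae_of_all _ (hasSum_indicator_preimage_singleton M X)
  refine ⟨integrable_of_hasSum_of_summable_integral_norm hF_int hF_sum hF, ?_⟩
  simpa only [F, integral_indicator_preimage_singleton hM hX hind] using
    hasSum_integral_of_hasSum_of_summable_integral_norm hF_int hF_sum hF

end RandomIndex

theorem hasSum_mul_div_iff_hasSum_nat_add {p c : ℕ → ℝ} {n₀ : ℕ} (hp : ∀ n, p n ≠ 0 ↔ n₀ ≤ n)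
    {a : ℝ} : HasSum (fun n ↦ p n * (c n / p n)) a ↔ HasSum (fun n ↦ c (n₀ + n)) a := by
  rw [← (add_right_injective n₀).hasSum_iff]
  · simp [Function.comp_def, mul_div_cancel₀ _ ((hp _).2 (Nat.le_add_right n₀ _))]
  · intro n hn
    have : ¬ n₀ ≤ n := fun h ↦ hn ⟨n - n₀, Nat.add_sub_cancel' h⟩
    simp [not_not.1 (mt (hp n).1 this)]

theorem rmlmc_unbiased_general {Ω : Type*} [MeasurableSpace Ω]
    (P : Measure Ω)
    (n₀ : ℕ) (Δ : ℕ → Ω → ℝ)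
    (hΔint : ∀ n, Integrable (Δ n) P)
    (hΔsum : Summable (fun n : ℕ => ∫ ω, |Δ (n₀ + n) ω| ∂P))
    (Y₀ : Ω → ℝ) (hY₀ : Integrable Y₀ P)
    (N : Ω → ℕ) (hN : Measurable N)
    (hindep : IndepFun N (fun ω => (Y₀ ω, fun n => Δ n ω)) P)
    (p : ℕ → ℝ) (hp : ∀ n, p n = (P {ω | N ω = n}).toReal)
    (hppos : ∀ n, n₀ ≤ n → 0 < p n)
    (hsupp : ∀ᵐ ω ∂P, n₀ ≤ N ω) :
    Integrable (fun ω => Y₀ ω + Δ (N ω) ω / p (N ω)) P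
      ∧ ∫ ω, (Y₀ ω + Δ (N ω) ω / p (N ω)) ∂P
        = (∫ ω, Y₀ ω ∂P) + ∑' n : ℕ, ∫ ω, Δ (n₀ + n) ω ∂P := by
  have hp_ne : ∀ n, p n ≠ 0 ↔ n₀ ≤ n := fun n ↦ by
    refine ⟨fun h ↦ ?_, fun h ↦ (hppos n h).ne'⟩
    by_contra hn
    have h_null : P {ω | N ω = n} = 0 :=
      measure_mono_null (fun ω (hω : N ω = n) ↦ show ¬n₀ ≤ N ω by rwa [hω]) (ae_iff.1 hsupp)
    exact h (by rw [hp n, h_null, ENNReal.toReal_zero])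
  have hX_indep : ∀ n, IndepFun N (fun ω ↦ Δ n ω / p n) P := fun n ↦
    hindep.comp measurable_id (((measurable_pi_apply n).comp measurable_snd).div_const _)
  have hp_real : ∀ n, P.real (N ⁻¹' {n}) = p n := fun n ↦ (hp n).symm
  have h_norm : ∀ n, ∫ ω, ‖Δ n ω / p n‖ ∂P = (∫ ω, |Δ n ω| ∂P) / p n := fun n ↦ by
    have hp_nonneg : 0 ≤ p n := (hp n).symm ▸ ENNReal.toReal_nonneg
    simp_rw [norm_div, Real.norm_eq_abs, abs_of_nonneg hp_nonneg]
    exact integral_div _ _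
  obtain ⟨h_int, h_hasSum⟩ := integrable_and_hasSum_integral_of_indepFun hN
    (fun n ↦ (hΔint n).div_const (p n)) hX_indep <| by
      simp_rw [h_norm, hp_real]
      exact ((hasSum_mul_div_iff_hasSum_nat_add hp_ne).2 hΔsum.hasSum).summable
  simp_rw [integral_div, hp_real, hasSum_mul_div_iff_hasSum_nat_add hp_ne] at h_hasSum
  exact ⟨hY₀.add h_int, by rw [integral_add hY₀ h_int, h_hasSum.tsum_eq]⟩

/-- rMLMC telescoping unbiasedness: let `(Δ_n)_{n ≥ n₀}` (indexed here by
`Δ (n₀ + n)`) be real random variables with `Σ_{n ≥ n₀} E|Δ_n| < ∞`, let `N` be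
an independent integer random variable supported on `{n₀, n₀+1, …}` with pmf
`p(n) > 0` for all `n ≥ n₀`, and let `Y₀` be integrable.  Then the estimator
`E := Y₀ + Δ_N / p(N)` is integrable and
`E[E] = E[Y₀] + Σ_{n ≥ n₀} E[Δ_n]`. -/
theorem rmlmc_unbiased {Ω : Type*} [MeasurableSpace Ω]
    (P : Measure Ω) [IsProbabilityMeasure P]
    (n₀ : ℕ) (Δ : ℕ → Ω → ℝ) (hΔmeas : ∀ n, Measurable (Δ n))
    (hΔint : ∀ n, Integrable (Δ n) P)
    (hΔsum : Summable (fun n : ℕ => ∫ ω, |Δ (n₀ + n) ω| ∂P))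
    (Y₀ : Ω → ℝ) (hY₀ : Integrable Y₀ P)
    (N : Ω → ℕ) (hN : Measurable N)
    (hindep : IndepFun N (fun ω => (Y₀ ω, fun n => Δ n ω)) P)
    (p : ℕ → ℝ) (hp : ∀ n, p n = (P {ω | N ω = n}).toReal)
    (hppos : ∀ n, n₀ ≤ n → 0 < p n)
    (hsupp : ∀ᵐ ω ∂P, n₀ ≤ N ω) :
    Integrable (fun ω => Y₀ ω + Δ (N ω) ω / p (N ω)) P
      ∧ ∫ ω, (Y₀ ω + Δ (N ω) ω / p (N ω)) ∂P
        = (∫ ω, Y₀ ω ∂P) + ∑' n : ℕ, ∫ ω, Δ (n₀ + n) ω ∂P :=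
  rmlmc_unbiased_general P n₀ Δ hΔint hΔsum Y₀ hY₀ N hN hindep p hp hppos hsupp
end
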